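/- arXiv:1707.00968 — 2 statements merged into one kernel-verified Lean document; each statement's English description precedes it below -/
import Mathlib

section
/- Let E be T-universally complete with weak order unit e = Te, T strictly positive, and let S, J be conditional expectation operators on E with TS = T = ST, TJ = T = JT and JS = J = SJ. Then for all f, g ∈ L²(T), S(f·Jg) = Jg·S(f). -/
open Finset

/-- The universal completion `E^u` of a Dedekind complete Riesz space with weak
order unit `e`, carrying its canonical `f`-algebra structure with `e = 1` the
multiplicative unit and weak order unit. The Riesz space `E` itself is modeled
as a Riesz subspace of `A`. -/
class FRieszSpace (A : Type*) extends CommRing A, Lattice A, Module ℝ A where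
  add_le_add_left' : ∀ a b : A, a ≤ b → ∀ c : A, c + a ≤ c + b
  mul_nonneg' : ∀ a b : A, 0 ≤ a → 0 ≤ b → 0 ≤ a * b
  smul_nonneg' : ∀ (r : ℝ) (a : A), 0 ≤ r → 0 ≤ a → 0 ≤ r • a
  inf_mul_orth : ∀ a b c : A, 0 ≤ c → a ⊓ b = 0 → (a * c) ⊓ b = 0
  one_weak_unit : ∀ a : A, (a ⊔ -a) ⊓ 1 = 0 → a = 0

variable {A : Type*} [FRieszSpace A]

/-- `E` is Dedekind complete: every nonempty subset of `E` bounded above in `E`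
has a supremum in `E`. -/
def DedekindCompleteIn (E : Set A) : Prop :=
  ∀ S : Set A, S ⊆ E → S.Nonempty → (∃ b ∈ E, ∀ x ∈ S, x ≤ b) → ∃ a ∈ E, IsLUB S a

/-- A Riesz subspace of `A` containing the weak order unit `1`. -/
structure IsRieszSubspace (E : Set A) : Prop where
  zero_mem : (0:A) ∈ E
  add_mem : ∀ x y : A, x ∈ E → y ∈ E → x + y ∈ E
  smul_mem : ∀ (r : ℝ) (x : A), x ∈ E → r • x ∈ E
  abs_mem : ∀ x : A, x ∈ E → (x ⊔ -x) ∈ E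
  one_mem : (1:A) ∈ E

/-- A conditional expectation operator on `E`: a positive order continuous
linear projection fixing the weak order unit, with range a Riesz subspace. -/
structure IsCondExpOn (E : Set A) (T : A →ₗ[ℝ] A) : Prop where
  mapsTo : ∀ x ∈ E, T x ∈ E
  positive : ∀ x : A, 0 ≤ x → 0 ≤ T x
  projection : ∀ x : A, T (T x) = T x
  unit : T 1 = 1
  range_abs : ∀ x : A, ∃ y : A, T y = (T x) ⊔ (-(T x))
  orderCont : ∀ (S : Set A) (a : A), S.Nonempty → DirectedOn (· ≤ ·) S → IsLUB S a →
      IsLUB (T '' S) (T a)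

def StrictlyPositive (T : A →ₗ[ℝ] A) : Prop := ∀ x : A, 0 < x → 0 < T x

/-- `E` is `T`-universally complete: every upward directed set in `E₊` whose
image under `T` is order bounded in `A = E^u` has a supremum in `E`. -/
def TUniversallyComplete (E : Set A) (T : A →ₗ[ℝ] A) : Prop :=
  ∀ S : Set A, S ⊆ E → S.Nonempty → DirectedOn (· ≤ ·) S → (∀ x ∈ S, 0 ≤ x) →
    BddAbove (T '' S) → ∃ a ∈ E, IsLUB S a

/-- `L²(T) = {x ∈ E : x² ∈ E}` (squares taken in the `f`-algebra `A = E^u`). -/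
def L2 (E : Set A) : Set A := {x | x ∈ E ∧ x * x ∈ E}

/-- A band projection: an order projection `0 ≤ P ≤ I`, `P² = P`. -/
def IsBandProjection (P : A →ₗ[ℝ] A) : Prop :=
  (∀ x, P (P x) = P x) ∧ ∀ x : A, 0 ≤ x → 0 ≤ P x ∧ P x ≤ x

/-- `P` is the band projection onto the band generated by `u ≥ 0`:
`P x = sup_n (x ⊓ n u)` for `x ≥ 0`. -/
def IsBandProjOnto (P : A →ₗ[ℝ] A) (u : A) : Prop :=
  IsBandProjection P ∧ ∀ x : A, 0 ≤ x → IsLUB {y | ∃ n : ℕ, y = x ⊓ (n • u)} (P x)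

/-- The variance `var(x) = T (x - Tx)²`. -/
def variance (T : A →ₗ[ℝ] A) (x : A) : A := T ((x - T x) * (x - T x))

/-- `f` and `g` are `T`-conditionally independent: there are conditional
expectation operators `Tf`, `Tg` commuting with `T`, with `f`, resp. `g`, in
their ranges, satisfying `Tf ∘ Tg = T = Tg ∘ Tf`. -/
def AreTCondIndep (E : Set A) (T : A →ₗ[ℝ] A) (f g : A) : Prop :=
  ∃ Tf Tg : A →ₗ[ℝ] A, IsCondExpOn E Tf ∧ IsCondExpOn E Tg ∧
    Tf f = f ∧ Tg g = g ∧
    T.comp Tf = T ∧ Tf.comp T = T ∧ T.comp Tg = T ∧ Tg.comp T = T ∧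
    Tf.comp Tg = T ∧ Tg.comp Tf = T

/-- A family of band projections is `T`-conditionally independent: `T`
factorizes over products of the components `P i e` and `(I - P i) e`. -/
def IsTCondIndepProjFamily {ι : Type*} (T : A →ₗ[ℝ] A) (P : ι → A →ₗ[ℝ] A) : Prop :=
  ∀ (s : Finset ι) (c : ι → Bool),
    T (∏ i ∈ s, (if c i then P i 1 else 1 - P i 1)) =
      ∏ i ∈ s, T (if c i then P i 1 else 1 - P i 1)

/-- `e`-uniform convergence of a sequence. -/
def EUnifTendsTo (x : ℕ → A) (l : A) : Prop :=
  ∀ ε : ℝ, 0 < ε → ∃ N : ℕ, ∀ n ≥ N, |x n - l| ≤ ε • (1:A)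

/-- Order convergence of a sequence. -/
def OrderConvergesTo (x : ℕ → A) (l : A) : Prop :=
  ∃ d : ℕ → A, Antitone d ∧ IsGLB (Set.range d) 0 ∧ ∀ n, |x n - l| ≤ d n

/-- `h = e^{-g}` via the functional calculus on `E^e`: for every sequence of
polynomials converging uniformly to `t ↦ exp (-t)` on `[-1,1]`, the
evaluations at `g` converge `e`-uniformly to `h`. -/
def IsExpNeg (g h : A) : Prop :=
  ∀ (d : ℕ → ℕ) (a : ℕ → ℕ → ℝ),
    (∀ ε : ℝ, 0 < ε → ∃ N : ℕ, ∀ k ≥ N, ∀ t ∈ Set.Icc (-1:ℝ) 1,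
        |(∑ i ∈ Finset.range (d k), a k i * t ^ i) - Real.exp (-t)| ≤ ε) →
    EUnifTendsTo (fun k => ∑ i ∈ Finset.range (d k), a k i • g ^ i) h


/-!
Put `w = J g`. Since `S J = J`, `w` is fixed by `S`, and the claim is the averaging property
`S (f * w) = w * S f` of the conditional expectation `S`. For a component `p` of the unit fixed
by `S` (`p ⊓ (1 - p) = 0`) it holds because `S` keeps bounded elements of the bands of `p` and
of `1 - p` in those bands. A bounded `w ≥ 0` fixed by `S` is approximated within `1 / M` by a sum
of such components, namely the components of the layers `(M • w - n)⁺`, so that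
`M • |S (f * w) - w * S f| ≤ 2 • S |f|` for every `M`. `A` is not assumed Archimedean, but
`T`-universal completeness makes it Archimedean against bounds in `E`, which kills the difference.
Unbounded `w` follows by order continuity of `S` along `w ⊓ n ↑ w`, and signed `f`, `w` by
splitting into positive and negative parts.
-/

section LatticeOrderedGroup

variable {α : Type*} [Lattice α] [AddCommGroup α] [AddLeftMono α] {a b c x : α}

lemma inf_add_le_of_inf_eq_zero (h : x ⊓ b = 0) (hc : 0 ≤ c) : x ⊓ (b + c) ≤ c :=
  calc x ⊓ (b + c) ≤ (x + c) ⊓ (b + c) := inf_le_inf_right _ (le_add_of_nonneg_right hc)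
    _ = c := by rw [← inf_add, h, zero_add]

lemma sub_inf_eq_posPart_sub (a b : α) : a - a ⊓ b = (a - b)⁺ := by
  rw [inf_eq_sub_posPart_sub, sub_sub_cancel]

lemma posPart_posPart_sub (hc : 0 ≤ c) (x : α) : (x⁺ - c)⁺ = (x - c)⁺ := by
  rw [posPart_def, posPart_def, posPart_def, sup_sub, zero_sub, sup_assoc,
    sup_eq_right.mpr (neg_nonpos.mpr hc)]

lemma posPart_sub_of_inf_eq_zero (h : a ⊓ b = 0) : (a - b)⁺ = a := by
  have hsum := inf_add_sup a b
  rw [h, zero_add] at hsum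
  rw [posPart_def, ← sub_self b, ← sup_sub, hsum, add_sub_cancel_right]

lemma posPart_eq_inv_two_smul [Module ℝ α] (a : α) : a⁺ = (2 : ℝ)⁻¹ • (a + |a|) := by
  rw [add_abs_eq_two_nsmul_posPart, ← Nat.cast_smul_eq_nsmul ℝ, smul_smul]
  norm_num

lemma IsLUB.range_inf {ι : Type*} {f : ι → α} (h : IsLUB (Set.range f) a) (v : α) :
    IsLUB (Set.range fun i => f i ⊓ v) (a ⊓ v) := by
  refine ⟨?_, fun b hb => ?_⟩
  · rintro _ ⟨i, rfl⟩
    exact inf_le_inf_right v (h.1 ⟨i, rfl⟩)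
  · have : a ≤ b + (a - v)⁺ := h.2 <| by
      rintro _ ⟨i, rfl⟩
      calc f i = f i ⊓ v + (f i - v)⁺ := by rw [← sub_inf_eq_posPart_sub, add_sub_cancel]
        _ ≤ b + (a - v)⁺ :=
          add_le_add (hb ⟨i, rfl⟩) (posPart_mono (sub_le_sub_right (h.1 ⟨i, rfl⟩) v))
    rwa [inf_eq_sub_posPart_sub, sub_le_iff_le_add]

end LatticeOrderedGroup

instance : IsOrderedAddMonoid A where
  add_le_add_left a b h c := by
    simpa only [add_comm _ c] using FRieszSpace.add_le_add_left' a b h c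

namespace FRieszSpace

lemma mul_eq_zero_of_inf_eq_zero {a b : A} (h : a ⊓ b = 0) : a * b = 0 := by
  have hab : (a * b) ⊓ b = 0 := inf_mul_orth a b b (h ▸ inf_le_right) h
  have := inf_mul_orth b (a * b) a (h ▸ inf_le_left) (inf_comm (a * b) b ▸ hab)
  rwa [mul_comm b a, inf_idem] at this

lemma mul_self_nonneg (a : A) : 0 ≤ a * a := by
  have h : a⁺ * a⁻ = 0 := mul_eq_zero_of_inf_eq_zero (posPart_inf_negPart_eq_zero a)
  have : a * a = a⁺ * a⁺ + a⁻ * a⁻ := by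
    conv_lhs => rw [← posPart_sub_negPart a]
    linear_combination (-2 : ℤ) * h
  rw [this]
  exact add_nonneg (mul_nonneg' _ _ (posPart_nonneg a) (posPart_nonneg a))
    (mul_nonneg' _ _ (negPart_nonneg a) (negPart_nonneg a))

end FRieszSpace

instance : ZeroLEOneClass A := ⟨by simpa using FRieszSpace.mul_self_nonneg (1 : A)⟩

instance : IsOrderedRing A := .of_mul_nonneg FRieszSpace.mul_nonneg'

instance : PosSMulMono ℝ A :=
  .of_smul_nonneg fun r hr a ha => FRieszSpace.smul_nonneg' r a hr ha

namespace FRieszSpace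

variable {a b c p : A}

lemma nsmul_inf_eq_zero (h : a ⊓ b = 0) (n : ℕ) : (n • a) ⊓ b = 0 := by
  simpa only [nsmul_eq_mul, mul_comm] using inf_mul_orth a b n (Nat.cast_nonneg n) h

lemma posPart_mul_of_nonneg (hc : 0 ≤ c) (a : A) : (c * a)⁺ = c * a⁺ := by
  have h := inf_mul_orth _ _ c hc (posPart_inf_negPart_eq_zero a)
  rw [inf_comm] at h
  have hdisj : (c * a⁺) ⊓ (c * a⁻) = 0 := by
    simpa only [mul_comm, inf_comm] using inf_mul_orth _ _ c hc h
  rw [← posPart_sub_of_inf_eq_zero hdisj, ← mul_sub, posPart_sub_negPart]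

lemma abs_mul_of_nonneg (hc : 0 ≤ c) (a : A) : |c * a| = c * |a| := by
  rw [← posPart_add_negPart, ← posPart_add_negPart, ← posPart_neg, ← posPart_neg, ← mul_neg,
    posPart_mul_of_nonneg hc, posPart_mul_of_nonneg hc, mul_add]

lemma eq_zero_of_inf_one_eq_zero (hc : 0 ≤ c) (h : c ⊓ 1 = 0) : c = 0 :=
  one_weak_unit c (by rwa [sup_eq_left.mpr (neg_le_self hc)])

lemma mul_nonneg_of_inf_negPart_eq_zero (h : p ⊓ a⁻ = 0) : 0 ≤ p * a := by
  rw [← posPart_sub_negPart a, mul_sub, mul_eq_zero_of_inf_eq_zero h, sub_zero]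
  exact mul_nonneg (h ▸ inf_le_left) (posPart_nonneg a)

end FRieszSpace

def IsComponentOfOne (p : A) : Prop := p ⊓ (1 - p) = 0

namespace IsComponentOfOne

variable {p y : A} (hp : IsComponentOfOne p)
include hp

lemma nonneg : 0 ≤ p := hp.symm.trans_le inf_le_left

lemma le_one : p ≤ 1 := sub_nonneg.mp (hp.symm.trans_le inf_le_right)

lemma one_sub : IsComponentOfOne (1 - p) := by
  rw [IsComponentOfOne, sub_sub_cancel, inf_comm]
  exact hp

lemma mul_eq_self_of_le_nsmul (hy : 0 ≤ y) {n : ℕ} (hyn : y ≤ n • p) : p * y = y := by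
  have h1p : 0 ≤ 1 - p := sub_nonneg.mpr hp.le_one
  have : (1 - p) * y = 0 := by
    refine le_antisymm ?_ (mul_nonneg h1p hy)
    calc (1 - p) * y ≤ (1 - p) * (n • p) := mul_le_mul_of_nonneg_left hyn h1p
      _ = 0 := by
        rw [mul_smul_comm, mul_comm, FRieszSpace.mul_eq_zero_of_inf_eq_zero hp, nsmul_zero]
  rw [sub_mul, one_mul, sub_eq_zero] at this
  exact this.symm

end IsComponentOfOne

lemma IsLUB.range_mul_of_le_one {ι : Type*} {f : ι → A} {a q : A} (h : IsLUB (Set.range f) a)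
    (hq0 : 0 ≤ q) (hq1 : q ≤ 1) : IsLUB (Set.range fun i => q * f i) (q * a) := by
  refine ⟨?_, fun b hb => ?_⟩
  · rintro _ ⟨i, rfl⟩
    exact mul_le_mul_of_nonneg_left (h.1 ⟨i, rfl⟩) hq0
  · have hba : a ≤ a + (b - q * a) := h.2 <| by
      rintro _ ⟨i, rfl⟩
      have hq : q * (a - f i) ≤ a - f i := by
        simpa only [one_mul] using mul_le_mul_of_nonneg_right hq1 (sub_nonneg.mpr (h.1 ⟨i, rfl⟩))
      calc f i = a - (a - f i) := (sub_sub_cancel a (f i)).symm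
        _ ≤ a - q * (a - f i) := sub_le_sub_left hq a
        _ = a + (q * f i - q * a) := by ring
        _ ≤ a + (b - q * a) := by gcongr; exact hb ⟨i, rfl⟩
    exact sub_nonneg.mp (le_add_iff_nonneg_right a |>.mp hba)

lemma inf_natCast_eq_sum {z : A} (hz : 0 ≤ z) (N : ℕ) :
    z ⊓ N = ∑ i ∈ range N, (z - i)⁺ ⊓ 1 := by
  induction N with
  | zero => simpa using hz
  | succ N ih =>
    rw [sum_range_succ, ← ih, inf_eq_sub_posPart_sub, inf_eq_sub_posPart_sub,
      inf_eq_sub_posPart_sub, posPart_posPart_sub zero_le_one, Nat.cast_succ, sub_add_eq_sub_sub]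
    abel

lemma monotone_nsmul_inf_one {u : A} (hu : 0 ≤ u) : Monotone fun m : ℕ => m • u ⊓ 1 :=
  fun _ _ hmn => inf_le_inf_right 1 (nsmul_le_nsmul_left hu hmn)

lemma inf_eq_zero_of_isLUB_nsmul_inf_one {u p v : A}
    (hp : IsLUB (Set.range fun m : ℕ => m • u ⊓ 1) p) (huv : u ⊓ v = 0) : p ⊓ v = 0 := by
  have hv : 0 ≤ v := huv ▸ inf_le_right
  have hu : 0 ≤ u := huv ▸ inf_le_left
  have hzero (m : ℕ) : m • u ⊓ 1 ⊓ v = 0 :=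
    le_antisymm (FRieszSpace.nsmul_inf_eq_zero huv m ▸ inf_le_inf_right v inf_le_left)
      (le_inf (le_inf (nsmul_nonneg hu m) zero_le_one) hv)
  have := hp.range_inf v
  simp only [hzero, Set.range_const] at this
  exact this.unique isLUB_singleton

namespace IsRieszSubspace

variable {E : Set A} (hE : IsRieszSubspace E) {x y : A}
include hE

lemma sub_mem (hx : x ∈ E) (hy : y ∈ E) : x - y ∈ E := by
  simpa [sub_eq_add_neg] using hE.add_mem _ _ hx (hE.smul_mem (-1) y hy)

lemma nsmul_mem (hx : x ∈ E) (n : ℕ) : n • x ∈ E := by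
  simpa only [Nat.cast_smul_eq_nsmul] using hE.smul_mem n x hx

lemma natCast_mem (n : ℕ) : (n : A) ∈ E := by
  simpa only [nsmul_one] using hE.nsmul_mem hE.one_mem n

lemma posPart_mem (hx : x ∈ E) : x⁺ ∈ E := by
  rw [posPart_eq_inv_two_smul]
  exact hE.smul_mem _ _ (hE.add_mem _ _ hx (hE.abs_mem x hx))

lemma negPart_mem (hx : x ∈ E) : x⁻ ∈ E := by
  simpa only [posPart_neg, neg_one_smul] using hE.posPart_mem (hE.smul_mem (-1) x hx)

lemma inf_mem (hx : x ∈ E) (hy : y ∈ E) : x ⊓ y ∈ E := by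
  rw [inf_eq_sub_posPart_sub]
  exact hE.sub_mem hx (hE.posPart_mem (hE.sub_mem hx hy))

end IsRieszSubspace

namespace IsCondExpOn

variable {E : Set A} {S : A →ₗ[ℝ] A} (hS : IsCondExpOn E S) {p u x y : A}
include hS

lemma mono (h : x ≤ y) : S x ≤ S y := by
  simpa only [map_sub, sub_nonneg] using hS.positive (y - x) (sub_nonneg.mpr h)

lemma abs_map_le (x : A) : |S x| ≤ S |x| :=
  abs_le'.mpr ⟨hS.mono (le_abs_self x), map_neg S x ▸ hS.mono (neg_le_abs x)⟩

lemma map_natCast (n : ℕ) : S n = n := by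
  rw [← nsmul_one, map_nsmul, hS.unit]

lemma map_abs (hx : S x = x) : S |x| = |x| := by
  obtain ⟨y, hy⟩ := hS.range_abs x
  have hy' : S y = |x| := by rw [hy, hx]; rfl
  rw [← hy', hS.projection]

lemma map_posPart (hx : S x = x) : S x⁺ = x⁺ := by
  rw [posPart_eq_inv_two_smul, map_smul, map_add, hx, hS.map_abs hx]

lemma map_negPart (hx : S x = x) : S x⁻ = x⁻ := by
  rw [← posPart_neg]
  exact hS.map_posPart (by rw [map_neg, hx])

lemma map_inf (hx : S x = x) (hy : S y = y) : S (x ⊓ y) = x ⊓ y := by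
  rw [inf_eq_sub_posPart_sub, map_sub, hx, hS.map_posPart (by rw [map_sub, hx, hy])]

lemma isLUB_range_map {f : ℕ → A} {a : A} (hf : Monotone f) (h : IsLUB (Set.range f) a) :
    IsLUB (Set.range fun n => S (f n)) (S a) := by
  have := hS.orderCont _ a (Set.range_nonempty f) (directedOn_range.mpr hf.directed_le) h
  rwa [← Set.range_comp] at this

lemma map_eq_of_isLUB_nsmul_inf_one (hp : IsLUB (Set.range fun m : ℕ => m • u ⊓ 1) p)
    (hu : 0 ≤ u) (huS : S u = u) : S p = p := by
  have hfix (m : ℕ) : S (m • u ⊓ 1) = m • u ⊓ 1 :=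
    hS.map_inf (by rw [map_nsmul, huS]) hS.unit
  have := hS.isLUB_range_map (monotone_nsmul_inf_one hu) hp
  simp only [hfix] at this
  exact this.unique hp

lemma abs_map_mul_sub_mul_map_le {d : A} (hd0 : 0 ≤ d) (hd1 : d ≤ 1) (x : A) :
    |S (x * d) - d * S x| ≤ 2 • S |x| := by
  have hle (y : A) : d * |y| ≤ |y| := by
    simpa using mul_le_mul_of_nonneg_right hd1 (abs_nonneg y)
  have h1 : |S (x * d)| ≤ S |x| := (hS.abs_map_le _).trans
    (hS.mono (by rw [mul_comm, FRieszSpace.abs_mul_of_nonneg hd0]; exact hle x))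
  have h2 : |d * S x| ≤ S |x| := by
    rw [FRieszSpace.abs_mul_of_nonneg hd0]
    exact (hle _).trans (hS.abs_map_le x)
  calc |S (x * d) - d * S x| ≤ |S (x * d)| + |d * S x| := by
        simpa only [sub_eq_add_neg, abs_neg] using abs_add_le (S (x * d)) (-(d * S x))
    _ ≤ 2 • S |x| := two_nsmul (S |x|) ▸ add_le_add h1 h2

end IsCondExpOn

lemma IsComponentOfOne.map_mul_of_le_natCast {E : Set A} {S : A →ₗ[ℝ] A} {p x : A}
    (hp : IsComponentOfOne p) (hS : IsCondExpOn E S) (hpS : S p = p) (hx : 0 ≤ x) {n : ℕ}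
    (hxn : x ≤ n) : S (p * x) = p * S x := by
  -- `S (q * x) ≤ n • q` confines `S (q * x)` to the component `q`, for `q = p` and `q = 1 - p`
  have key {q : A} (hq : IsComponentOfOne q) (hqS : S q = q) : q * S (q * x) = S (q * x) := by
    refine hq.mul_eq_self_of_le_nsmul (hS.positive _ (mul_nonneg hq.nonneg hx)) (n := n) ?_
    calc S (q * x) ≤ S (q * n) := hS.mono (mul_le_mul_of_nonneg_left hxn hq.nonneg)
      _ = n • q := by rw [mul_comm, ← nsmul_eq_mul, map_nsmul, hqS]
  have hq := key hp.one_sub (by rw [map_sub, hS.unit, hpS])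
  calc S (p * x) = p * S (p * x) + p * ((1 - p) * S ((1 - p) * x)) := by
        rw [key hp hpS, ← mul_assoc, FRieszSpace.mul_eq_zero_of_inf_eq_zero hp, zero_mul,
          add_zero]
    _ = p * S x := by rw [hq, ← mul_add, ← map_add, ← add_mul, add_sub_cancel, one_mul]

namespace TUniversallyComplete

variable {E : Set A} {T S : A →ₗ[ℝ] A}

lemma exists_isLUB (hTU : TUniversallyComplete E T) (hT : IsCondExpOn E T) {f : ℕ → A} {y : A}
    (hf : Monotone f) (hfE : ∀ n, f n ∈ E) (hf0 : ∀ n, 0 ≤ f n) (hfy : ∀ n, f n ≤ y) :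
    ∃ a ∈ E, IsLUB (Set.range f) a :=
  hTU _ (Set.range_subset_iff.mpr hfE) (Set.range_nonempty f)
    (directedOn_range.mpr hf.directed_le) (Set.forall_mem_range.mpr hf0)
    ⟨T y, Set.forall_mem_image.mpr <| Set.forall_mem_range.mpr fun n => hT.mono (hfy n)⟩

variable (hTU : TUniversallyComplete E T) (hE : IsRieszSubspace E) (hT : IsCondExpOn E T)
include hTU hE hT

lemma eq_zero_of_nsmul_le_of_mem {x y : A} (hxE : x ∈ E) (hx : 0 ≤ x)
    (h : ∀ n : ℕ, n • x ≤ y) : x = 0 := by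
  obtain ⟨b, -, hb⟩ := hTU.exists_isLUB hT (fun m n hmn => nsmul_le_nsmul_left hx hmn)
    (hE.nsmul_mem hxE) (fun n => nsmul_nonneg hx n) h
  have : b ≤ b - x := hb.2 <| Set.forall_mem_range.mpr fun n =>
    le_sub_iff_add_le.mpr (by simpa only [succ_nsmul] using hb.1 ⟨n + 1, rfl⟩)
  exact le_antisymm (by simpa using this) hx

lemma eq_zero_of_nsmul_le {c y : A} (hc : 0 ≤ c) (hyE : y ∈ E) (h : ∀ n : ℕ, n • c ≤ y) :
    c = 0 := by
  have hy : 0 ≤ y := hc.trans (by simpa using h 1)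
  have hle_smul {x : A} (hx : ∀ n : ℕ, n • x ≤ y) (k : ℕ) : x ≤ ((k : ℝ) + 1)⁻¹ • y := by
    rw [le_inv_smul_iff_of_pos (by positivity)]
    exact_mod_cast (Nat.cast_smul_eq_nsmul ℝ (k + 1) x).le.trans (hx (k + 1))
  -- `1 - d k = (y / (k + 1)) ⊓ 1` decreases to `0` and dominates `c ⊓ 1`
  set d : ℕ → A := fun k => 1 - (((k : ℝ) + 1)⁻¹ • y) ⊓ 1
  have hd : Monotone d := fun k l hkl => sub_le_sub_left (inf_le_inf_right _
    (smul_le_smul_of_nonneg_right (inv_anti₀ (by positivity) (by simpa using hkl)) hy)) 1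
  have hd1 (k : ℕ) : d k ≤ 1 :=
    sub_le_self _ (le_inf (smul_nonneg (by positivity) hy) zero_le_one)
  obtain ⟨a, haE, ha⟩ := hTU.exists_isLUB hT hd
    (fun k => hE.sub_mem hE.one_mem (hE.inf_mem (hE.smul_mem _ _ hyE) hE.one_mem))
    (fun k => sub_nonneg.mpr inf_le_right) hd1
  have ha1 : a = 1 := by
    have h1a : 0 ≤ 1 - a := sub_nonneg.mpr (ha.2 (Set.forall_mem_range.mpr hd1))
    have hbound (n : ℕ) : n • (1 - a) ≤ y := by
      have hn : ((n : ℝ) + 1) • (1 - a) ≤ y := by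
        rw [← le_inv_smul_iff_of_pos (by positivity)]
        calc 1 - a ≤ 1 - d n := sub_le_sub_left (ha.1 ⟨n, rfl⟩) 1
          _ ≤ ((n : ℝ) + 1)⁻¹ • y := by rw [sub_sub_cancel]; exact inf_le_left
      calc n • (1 - a) ≤ (n + 1) • (1 - a) := nsmul_le_nsmul_left h1a n.le_succ
        _ ≤ y := by rwa [← Nat.cast_smul_eq_nsmul ℝ, Nat.cast_succ]
    exact (sub_eq_zero.mp (hTU.eq_zero_of_nsmul_le_of_mem hE hT
      (hE.sub_mem hE.one_mem haE) h1a hbound)).symm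
  have hca : c ⊓ 1 ≤ 1 - a := by
    refine le_sub_comm.mp (ha.2 (Set.forall_mem_range.mpr fun k => ?_))
    exact sub_le_sub_left (inf_le_inf_right 1 (hle_smul h k)) 1
  rw [ha1, sub_self] at hca
  exact FRieszSpace.eq_zero_of_inf_one_eq_zero hc (le_antisymm hca (le_inf hc zero_le_one))

lemma exists_isLUB_nsmul_inf_one {u : A} (hu : 0 ≤ u) (huE : u ∈ E) :
    ∃ p, IsLUB (Set.range fun m : ℕ => m • u ⊓ 1) p :=
  let ⟨p, _, hp⟩ := hTU.exists_isLUB hT (monotone_nsmul_inf_one hu)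
    (fun m => hE.inf_mem (hE.nsmul_mem huE m) hE.one_mem)
    (fun m => le_inf (nsmul_nonneg hu m) zero_le_one) (fun _ => inf_le_right)
  ⟨p, hp⟩

lemma inf_one_sub_eq_zero_of_isLUB_nsmul_inf_one {u p : A}
    (hp : IsLUB (Set.range fun m : ℕ => m • u ⊓ 1) p) (hu : 0 ≤ u) : u ⊓ (1 - p) = 0 := by
  have hp1 : p ≤ 1 := hp.2 (Set.forall_mem_range.mpr fun _ => inf_le_right)
  set s := u ⊓ (1 - p)
  have hs : 0 ≤ s := le_inf hu (sub_nonneg.mpr hp1)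
  refine hTU.eq_zero_of_nsmul_le hE hT hs hE.one_mem fun k => ?_
  -- `s` lives where `k • u < 1`, and there `k • s ≤ k • u < 1`
  set a := k • u - 1
  have hsa : s ⊓ a⁺ = 0 := by
    have : s ≤ a⁻ := calc
      s ≤ 1 - p := inf_le_right
      _ ≤ 1 - 1 ⊓ k • u := sub_le_sub_left (inf_comm (k • u) 1 ▸ hp.1 ⟨k, rfl⟩) 1
      _ = a⁻ := by rw [sub_inf_eq_posPart_sub, ← posPart_neg, neg_sub]
    refine le_antisymm ?_ (le_inf hs (posPart_nonneg a))
    calc s ⊓ a⁺ ≤ a⁻ ⊓ a⁺ := inf_le_inf_right _ this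
      _ = 0 := by rw [inf_comm, posPart_inf_negPart_eq_zero]
  calc k • s = k • s ⊓ (a⁺ + 1) :=
        (inf_eq_left.mpr ((nsmul_le_nsmul_right inf_le_left k).trans
          (by rw [← sub_le_iff_le_add]; exact le_posPart a))).symm
    _ ≤ 1 := inf_add_le_of_inf_eq_zero (FRieszSpace.nsmul_inf_eq_zero hsa k) zero_le_one

lemma isComponentOfOne_of_isLUB_nsmul_inf_one {u p : A}
    (hp : IsLUB (Set.range fun m : ℕ => m • u ⊓ 1) p) (hu : 0 ≤ u) : IsComponentOfOne p :=
  inf_eq_zero_of_isLUB_nsmul_inf_one hp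
    (hTU.inf_one_sub_eq_zero_of_isLUB_nsmul_inf_one hE hT hp hu)

lemma isLUB_mul_inf_natCast {f w : A} (hf : 0 ≤ f) (hwE : w ∈ E) :
    IsLUB (Set.range fun n : ℕ => f * (w ⊓ n)) (f * w) := by
  refine ⟨Set.forall_mem_range.mpr fun n => mul_le_mul_of_nonneg_left inf_le_left hf,
    fun b hb => ?_⟩
  set c := (f * w - b)⁺
  have hc : 0 ≤ c := posPart_nonneg _
  suffices ∀ m : ℕ, m • (c ⊓ 1) ≤ w⁺ by
    have := hTU.eq_zero_of_nsmul_le hE hT (le_inf hc zero_le_one) (hE.posPart_mem hwE) this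
    exact sub_nonpos.mp (posPart_eq_zero.mp (FRieszSpace.eq_zero_of_inf_one_eq_zero hc this))
  intro m
  -- `c ⊓ 1` lies below the component `p` of `(w - m)⁺`, and `m • p ≤ w⁺`
  obtain ⟨p, hp⟩ := hTU.exists_isLUB_nsmul_inf_one hE hT (posPart_nonneg (w - m))
    (hE.posPart_mem (hE.sub_mem hwE (hE.natCast_mem m)))
  have hpc := hTU.isComponentOfOne_of_isLUB_nsmul_inf_one hE hT hp (posPart_nonneg _)
  have hcu : c ≤ f * (w - m)⁺ := by
    rw [← posPart_eq_self.mpr (mul_nonneg hf (posPart_nonneg (w - m))), ← sub_inf_eq_posPart_sub,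
      mul_sub]
    exact posPart_mono (sub_le_sub_left (hb ⟨m, rfl⟩) _)
  have hcp : c ⊓ 1 ≤ p := by
    have hdisj : f * (w - m)⁺ ⊓ (1 - p) = 0 := by
      simpa only [mul_comm] using FRieszSpace.inf_mul_orth _ _ f hf
        (hTU.inf_one_sub_eq_zero_of_isLUB_nsmul_inf_one hE hT hp (posPart_nonneg _))
    have : c ⊓ (1 - p) = 0 :=
      le_antisymm (hdisj ▸ inf_le_inf_right _ hcu) (le_inf hc hpc.one_sub.nonneg)
    simpa using inf_add_le_of_inf_eq_zero this hpc.nonneg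
  have hpw : (m : A) * p ≤ w⁺ := by
    have := FRieszSpace.mul_nonneg_of_inf_negPart_eq_zero
      (inf_eq_zero_of_isLUB_nsmul_inf_one hp (posPart_inf_negPart_eq_zero (w - m)))
    calc (m : A) * p ≤ p * w := by rwa [mul_sub, sub_nonneg, mul_comm] at this
      _ ≤ p * w⁺ := mul_le_mul_of_nonneg_left (le_posPart w) hpc.nonneg
      _ ≤ w⁺ := by simpa using mul_le_mul_of_nonneg_right hpc.le_one (posPart_nonneg w)
  calc m • (c ⊓ 1) ≤ m • p := nsmul_le_nsmul_right hcp m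
    _ ≤ w⁺ := by rwa [nsmul_eq_mul]

lemma isLUB_inf_natCast {z : A} (hzE : z ∈ E) : IsLUB (Set.range fun n : ℕ => z ⊓ n) z := by
  simpa using hTU.isLUB_mul_inf_natCast hE hT zero_le_one hzE

lemma map_mul_of_isComponentOfOne (hS : IsCondExpOn E S) {p z : A} (hp : IsComponentOfOne p)
    (hpS : S p = p) (hzE : z ∈ E) : S (p * z) = p * S z := by
  have hp0 := hp.nonneg
  have hp1 := hp.le_one
  have hpos {z : A} (hzE : z ∈ E) (hz : 0 ≤ z) : S (p * z) = p * S z := by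
    have hmono : Monotone fun n : ℕ => z ⊓ n := fun _ _ h => inf_le_inf_left z (Nat.mono_cast h)
    have hlub := hTU.isLUB_inf_natCast hE hT hzE
    have h1 := hS.isLUB_range_map (fun _ _ h => mul_le_mul_of_nonneg_left (hmono h) hp0)
      (hlub.range_mul_of_le_one hp0 hp1)
    have h2 := (hS.isLUB_range_map hmono hlub).range_mul_of_le_one hp0 hp1
    simp only [hp.map_mul_of_le_natCast hS hpS (le_inf hz (Nat.cast_nonneg _)) inf_le_right]
      at h1
    exact h1.unique h2
  rw [← posPart_sub_negPart z, mul_sub, map_sub, map_sub, mul_sub,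
    hpos (hE.posPart_mem hzE) (posPart_nonneg z), hpos (hE.negPart_mem hzE) (negPart_nonneg z)]

lemma exists_sum_components_approx (hS : IsCondExpOn E S) {z : A} (hzE : z ∈ E)
    (hzS : S z = z) (hz : 0 ≤ z) {N : ℕ} (hzN : z ≤ N) :
    ∃ p : ℕ → A, (∀ n, IsComponentOfOne (p n) ∧ S (p n) = p n) ∧
      ∑ n ∈ range N, p n ≤ z ∧ z ≤ ∑ n ∈ range N, p n + 1 := by
  -- `p n`, the component of `(z - (n + 1))⁺`, lies between the layers `e (n + 1)` and `e n` of `z`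
  set e : ℕ → A := fun n => (z - n)⁺ ⊓ 1
  have hu (n : ℕ) : 0 ≤ (z - (n + 1 : ℕ))⁺ := posPart_nonneg _
  choose p hp using fun n : ℕ => hTU.exists_isLUB_nsmul_inf_one hE hT (hu n)
    (hE.posPart_mem (hE.sub_mem hzE (hE.natCast_mem (n + 1))))
  have hcomp (n : ℕ) := hTU.isComponentOfOne_of_isLUB_nsmul_inf_one hE hT (hp n) (hu n)
  have hlow (n : ℕ) : e (n + 1) ≤ p n := by simpa [e] using (hp n).1 ⟨1, rfl⟩
  have hup (n : ℕ) : p n ≤ e n := by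
    have hp0 := (hcomp n).nonneg
    have hp1 := (hcomp n).le_one
    have : 0 ≤ p n * (z - (n + 1 : ℕ)) := FRieszSpace.mul_nonneg_of_inf_negPart_eq_zero
      (inf_eq_zero_of_isLUB_nsmul_inf_one (hp n) (posPart_inf_negPart_eq_zero _))
    refine le_inf ?_ hp1
    calc p n ≤ p n * (z - n) := by
          rw [← sub_nonneg]; convert this using 1; push_cast; ring
      _ ≤ p n * (z - n)⁺ := mul_le_mul_of_nonneg_left (le_posPart _) hp0
      _ ≤ (z - n)⁺ := by simpa using mul_le_mul_of_nonneg_right hp1 (posPart_nonneg (z - n))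
  have hsum : ∑ n ∈ range N, e n = z := by rw [← inf_natCast_eq_sum hz, inf_eq_left.mpr hzN]
  refine ⟨p, fun n => ⟨hcomp n, ?_⟩, hsum ▸ sum_le_sum fun n _ => hup n, ?_⟩
  · exact hS.map_eq_of_isLUB_nsmul_inf_one (hp n) (hu n)
      (hS.map_posPart (by rw [map_sub, hzS, hS.map_natCast]))
  · calc z ≤ z + e N := le_add_of_nonneg_right (le_inf (posPart_nonneg _) zero_le_one)
      _ = ∑ n ∈ range N, e (n + 1) + e 0 := by rw [← sum_range_succ', sum_range_succ, hsum]
      _ ≤ ∑ n ∈ range N, p n + 1 := add_le_add (sum_le_sum fun n _ => hlow n) inf_le_right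

lemma map_mul_of_le_natCast (hS : IsCondExpOn E S) {w x : A} (hwE : w ∈ E) (hwS : S w = w)
    (hw : 0 ≤ w) {m : ℕ} (hwm : w ≤ m) (hxE : x ∈ E) : S (x * w) = w * S x := by
  set D := S (x * w) - w * S x
  -- approximating `M • w` by a sum `Q` of components gives `M • |D| ≤ 2 • S |x|` for every `M`
  suffices h : ∀ M : ℕ, M • |D| ≤ 2 • S |x| by
    have hD := hTU.eq_zero_of_nsmul_le hE hT (abs_nonneg D)
      (hE.nsmul_mem (hS.mapsTo _ (hE.abs_mem x hxE)) 2) h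
    exact sub_eq_zero.mp (le_antisymm ((le_abs_self D).trans hD.le)
      (neg_nonpos.mp ((neg_le_abs D).trans hD.le)))
  intro M
  have hwM : M • w ≤ (M * m : ℕ) := by
    rw [Nat.cast_mul, ← nsmul_eq_mul]; exact nsmul_le_nsmul_right hwm M
  obtain ⟨p, hp, hQw, hwQ⟩ := hTU.exists_sum_components_approx hE hT hS (hE.nsmul_mem hwE M)
    (by rw [map_nsmul, hwS]) (nsmul_nonneg hw M) hwM
  set Q := ∑ n ∈ range (M * m), p n
  have hQ : S (x * Q) = Q * S x := by
    simp only [Q, mul_sum, sum_mul, map_sum]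
    refine sum_congr rfl fun n _ => ?_
    rw [mul_comm x, hTU.map_mul_of_isComponentOfOne hE hT hS (hp n).1 (hp n).2 hxE, mul_comm]
  have hMD : (M : A) * D = S (x * (M • w - Q)) - (M • w - Q) * S x := by
    rw [mul_sub x, map_sub, hQ, sub_mul (M • w), mul_smul_comm, smul_mul_assoc, map_nsmul,
      nsmul_eq_mul, nsmul_eq_mul]
    ring
  calc M • |D| = |(M : A) * D| := by
        rw [nsmul_eq_mul, FRieszSpace.abs_mul_of_nonneg M.cast_nonneg]
    _ ≤ 2 • S |x| := hMD ▸ hS.abs_map_mul_sub_mul_map_le (sub_nonneg.mpr hQw)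
      (sub_le_iff_le_add'.mpr hwQ) x

theorem map_mul_of_map_eq (hS : IsCondExpOn E S) {w f : A} (hwE : w ∈ E) (hwS : S w = w)
    (hfE : f ∈ E) : S (f * w) = w * S f := by
  have hpos {w f : A} (hwE : w ∈ E) (hwS : S w = w) (hw : 0 ≤ w) (hfE : f ∈ E) (hf : 0 ≤ f) :
      S (f * w) = w * S f := by
    have hmono : Monotone fun n : ℕ => w ⊓ n := fun _ _ h => inf_le_inf_left w (Nat.mono_cast h)
    have h1 := hS.isLUB_range_map (fun _ _ h => mul_le_mul_of_nonneg_left (hmono h) hf)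
      (hTU.isLUB_mul_inf_natCast hE hT hf hwE)
    have h2 := hTU.isLUB_mul_inf_natCast hE hT (hS.positive f hf) hwE
    simp only [hTU.map_mul_of_le_natCast hE hT hS (hE.inf_mem hwE (hE.natCast_mem _))
      (hS.map_inf hwS (hS.map_natCast _)) (le_inf hw (Nat.cast_nonneg _)) inf_le_right hfE,
      mul_comm _ (S f)] at h1
    rw [h1.unique h2, mul_comm]
  have hw_pos {w : A} (hwE : w ∈ E) (hwS : S w = w) (hw : 0 ≤ w) : S (f * w) = w * S f := by
    rw [← posPart_sub_negPart f, sub_mul, map_sub, map_sub, mul_sub,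
      hpos hwE hwS hw (hE.posPart_mem hfE) (posPart_nonneg f),
      hpos hwE hwS hw (hE.negPart_mem hfE) (negPart_nonneg f)]
  rw [← posPart_sub_negPart w, mul_sub, map_sub, sub_mul,
    hw_pos (hE.posPart_mem hwE) (hS.map_posPart hwS) (posPart_nonneg w),
    hw_pos (hE.negPart_mem hwE) (hS.map_negPart hwS) (negPart_nonneg w)]

end TUniversallyComplete

theorem condexp_averaging_L2_general {A : Type*} [FRieszSpace A] (E : Set A) (hE : IsRieszSubspace E)
    (T : A →ₗ[ℝ] A) (hT : IsCondExpOn E T)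
    (hTU : TUniversallyComplete E T)
    (S J : A →ₗ[ℝ] A) (hS : IsCondExpOn E S) (hJ : IsCondExpOn E J)
    (hSJ : S.comp J = J)
    (f g : A) (hf : f ∈ L2 E) (hg : g ∈ L2 E) :
    S (f * J g) = J g * S f :=
  hTU.map_mul_of_map_eq hE hT hS (hJ.mapsTo g hg.1) (LinearMap.congr_fun hSJ g) hf.1

/-- For conditional expectations `S`, `J` commuting with `T`, with `JS = J = SJ`:
`S(f · Jg) = Jg · S f` for all `f, g ∈ L²(T)`. -/
theorem condexp_averaging_L2 {A : Type*} [FRieszSpace A] (E : Set A) (hE : IsRieszSubspace E)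
    (T : A →ₗ[ℝ] A) (hT : IsCondExpOn E T) (hTsp : StrictlyPositive T)
    (hTU : TUniversallyComplete E T)
    (S J : A →ₗ[ℝ] A) (hS : IsCondExpOn E S) (hJ : IsCondExpOn E J)
    (hTS : T.comp S = T) (hST : S.comp T = T)
    (hTJ : T.comp J = T) (hJT : J.comp T = T)
    (hJS : J.comp S = J) (hSJ : S.comp J = J)
    (f g : A) (hf : f ∈ L2 E) (hg : g ∈ L2 E) :
    S (f * J g) = J g * S f :=
  condexp_averaging_L2_general E hE T hT hTU S J hS hJ hSJ f g hf hg
end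

section
/- Let (P_j)_{j=1}^n be T-conditionally independent band projections with TP_j e = f, and S_n = Σ_{j=1}^n P_j e. Then var(S_n) = n f(e-f). -/
open Finset

variable {A : Type*} [FRieszSpace A]

/-!
For a band projection `P`, the element `p = P e` is a component of `e`: `p ⊓ (e - p) = 0`. In the
`f`-algebra the product `p (e - p)` is disjoint from both `p` and `e - p`, hence from the weak order
unit `e = p + (e - p)`, so it vanishes and `p² = p`. Thus `T (p_j²) = f`, while conditional
independence gives `T (p_j p_k) = f²` for `j ≠ k`. The `p_j` are therefore pairwise uncorrelated,
so the variance of their sum is the sum of the variances `f - f² = f (e - f)`.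
-/

section Uncorrelated

variable {R F ι : Type*} [CommRing R] [FunLike F R R] [AddMonoidHomClass F R R]

theorem map_sum_mul_sum_sub_of_pairwise_mul (T : F) (s : Finset ι) (x : ι → R)
    (h : ∀ j ∈ s, ∀ k ∈ s, j ≠ k → T (x j * x k) = T (x j) * T (x k)) :
    T ((∑ j ∈ s, x j) * ∑ j ∈ s, x j) - T (∑ j ∈ s, x j) * T (∑ j ∈ s, x j) =
      ∑ j ∈ s, (T (x j * x j) - T (x j) * T (x j)) := by
  classical
  have hsplit : ∀ j ∈ s, ∀ k ∈ s, T (x j * x k) =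
      T (x j) * T (x k) + if j = k then T (x j * x j) - T (x j) * T (x j) else 0 := by
    intro j hj k hk
    split_ifs with hjk
    · subst hjk; ring
    · rw [h j hj k hk hjk, add_zero]
  calc T ((∑ j ∈ s, x j) * ∑ j ∈ s, x j) - T (∑ j ∈ s, x j) * T (∑ j ∈ s, x j)
      = ∑ j ∈ s, ∑ k ∈ s, T (x j * x k) - ∑ j ∈ s, ∑ k ∈ s, T (x j) * T (x k) := by
        simp only [sum_mul_sum, map_sum]
    _ = ∑ j ∈ s, (T (x j * x j) - T (x j) * T (x j)) := by
        rw [sub_eq_iff_eq_add', ← sum_add_distrib]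
        refine sum_congr rfl fun j hj => ?_
        rw [sum_congr rfl (hsplit j hj), sum_add_distrib, sum_ite_eq, if_pos hj]

end Uncorrelated

namespace FRieszSpace

instance : AddLeftMono A := ⟨fun c _ _ h => add_le_add_left' _ _ h c⟩

/-- In the `f`-algebra `1 = 1⁺ - 1⁻` gives `1⁺ 1⁻ = 1⁻ + (1⁻)² ≥ 1⁻`, while `1⁺ 1⁻ ⊥ 1⁻`. -/
instance : ZeroLEOneClass A where
  zero_le_one := by
    have horth : ((1 : A)⁺ * (1 : A)⁻) ⊓ (1 : A)⁻ = 0 :=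
      inf_mul_orth _ _ _ (negPart_nonneg 1) (posPart_inf_negPart_eq_zero 1)
    have hpos : (1 : A)⁺ = 1 + (1 : A)⁻ := eq_add_of_sub_eq (posPart_sub_negPart 1)
    have hle : (1 : A)⁻ ≤ (1 : A)⁺ * (1 : A)⁻ := by
      rw [hpos, add_mul, one_mul]
      exact le_add_of_nonneg_right (mul_nonneg' _ _ (negPart_nonneg 1) (negPart_nonneg 1))
    rw [← negPart_eq_zero, ← horth, inf_eq_right.mpr hle]

theorem inf_add_eq_zero {u p q : A} (hp : u ⊓ p = 0) (hq : u ⊓ q = 0) : u ⊓ (p + q) = 0 := by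
  have hu : 0 ≤ u := hp ▸ inf_le_left
  have hp0 : 0 ≤ p := hp ▸ inf_le_right
  have hq0 : 0 ≤ q := hq ▸ inf_le_right
  have hle_q : u ⊓ (p + q) ≤ q := by
    calc u ⊓ (p + q) ≤ (u + q) ⊓ (p + q) := inf_le_inf_right _ (le_add_of_nonneg_right hq0)
      _ = q := by rw [← inf_add, hp, zero_add]
  refine le_antisymm ?_ (le_inf hu (add_nonneg hp0 hq0))
  exact hq ▸ le_inf inf_le_left hle_q

/-- `p q` is disjoint from `p` and from `q`, hence from the weak order unit `p + q`. -/
theorem mul_eq_zero_of_inf_eq_zero_of_add_eq_one {p q : A} (h : p ⊓ q = 0) (hpq : p + q = 1) :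
    p * q = 0 := by
  have hpq0 : 0 ≤ p * q := mul_nonneg' _ _ (h ▸ inf_le_left) (h ▸ inf_le_right)
  have hq : (p * q) ⊓ q = 0 := inf_mul_orth _ _ _ (h ▸ inf_le_right) h
  have hp : (p * q) ⊓ p = 0 := by
    rw [mul_comm]; exact inf_mul_orth _ _ _ (h ▸ inf_le_left) (inf_comm p q ▸ h)
  apply one_weak_unit
  rw [sup_eq_left.mpr (neg_le_self hpq0), ← hpq]
  exact inf_add_eq_zero hp hq

theorem mul_self_eq_of_inf_one_sub_eq_zero {p : A} (h : p ⊓ (1 - p) = 0) : p * p = p := by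
  have := mul_eq_zero_of_inf_eq_zero_of_add_eq_one h (add_sub_cancel p 1)
  rwa [mul_one_sub, sub_eq_zero, eq_comm] at this

end FRieszSpace

namespace IsBandProjection

variable {P : A →ₗ[ℝ] A}

theorem inf_one_sub_eq_zero (hP : IsBandProjection P) : P 1 ⊓ (1 - P 1) = 0 := by
  obtain ⟨hidem, hpos⟩ := hP
  set w := P 1 ⊓ (1 - P 1)
  have hP1 := hpos 1 zero_le_one
  have hw0 : 0 ≤ w := le_inf hP1.1 (sub_nonneg.mpr hP1.2)
  have hPw : P w ≤ 0 := by
    have := (hpos (1 - P 1 - w) (sub_nonneg.mpr inf_le_right)).1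
    rwa [map_sub, map_sub, hidem, sub_self, zero_sub, neg_nonneg] at this
  have hwP : w ≤ P w := by
    have := (hpos (P 1 - w) (sub_nonneg.mpr inf_le_left)).2
    rwa [map_sub, hidem, sub_le_sub_iff_left] at this
  exact le_antisymm (hwP.trans hPw) hw0

theorem apply_one_mul_self (hP : IsBandProjection P) : P 1 * P 1 = P 1 :=
  FRieszSpace.mul_self_eq_of_inf_one_sub_eq_zero hP.inf_one_sub_eq_zero

end IsBandProjection

theorem IsTCondIndepProjFamily.map_mul_of_ne {ι : Type*} {T : A →ₗ[ℝ] A}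
    {P : ι → A →ₗ[ℝ] A} (hind : IsTCondIndepProjFamily T P) {j k : ι} (hjk : j ≠ k) :
    T (P j 1 * P k 1) = T (P j 1) * T (P k 1) := by
  classical
  simpa [prod_pair hjk] using hind {j, k} fun _ => true

theorem bernoulli_variance_general {A : Type*} [FRieszSpace A] (T : A →ₗ[ℝ] A)
    (P : ℕ → A →ₗ[ℝ] A) (hP : ∀ j, IsBandProjection (P j))
    (hind : IsTCondIndepProjFamily T P)
    (f : A) (hPf : ∀ j, T (P j 1) = f) (n : ℕ)
    (Sn : A) (hSn : Sn = ∑ k ∈ Finset.range n, P k 1) :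
    T (Sn * Sn) - T Sn * T Sn = n • (f * (1 - f)) := by
  rw [hSn, map_sum_mul_sum_sub_of_pairwise_mul T _ _ fun j _ k _ hjk => hind.map_mul_of_ne hjk]
  simp [(hP _).apply_one_mul_self, hPf, mul_sub]

/-- `var(S_n) = n f (e - f)`, where `var(g) = Tg² - (Tg)²`. -/
theorem bernoulli_variance {A : Type*} [FRieszSpace A] (E : Set A) (hE : IsRieszSubspace E)
    (T : A →ₗ[ℝ] A) (hT : IsCondExpOn E T) (hTsp : StrictlyPositive T)
    (hTU : TUniversallyComplete E T)
    (P : ℕ → A →ₗ[ℝ] A) (hP : ∀ j, IsBandProjection (P j))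
    (hPE : ∀ j, P j 1 ∈ E)
    (hind : IsTCondIndepProjFamily T P)
    (f : A) (hPf : ∀ j, T (P j 1) = f) (n : ℕ)
    (Sn : A) (hSn : Sn = ∑ k ∈ Finset.range n, P k 1) :
    T (Sn * Sn) - T Sn * T Sn = n • (f * (1 - f)) :=
  bernoulli_variance_general T P hP hind f hPf n Sn hSn
end
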